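/- Let E be a pseudo effect algebra satisfying (RDP) and let m be a Jordan signed measure on E. Define v_m : E → ℝ by v_m(x) := sup{|m(x₁)| + ⋯ + |m(xₙ)| : x = x₁ + ⋯ + xₙ, x₁, …, xₙ ∈ E, n ≥ 1}. Then v_m = |m|, where |m| = m⁺ + m⁻ is the absolute value of m in the lattice J(E). -/

import Mathlib

/-! Under (RDP) the function `a ↦ sup {m y : y ≤ a}` is additive, hence a measure lying
above `m` and `0` in `J(E)`; so `m⁺` is below it and `m ⋀ 0` is above `m` minus it.
Pointwise `|m| ≤ m⁺ - (m ⋀ 0)`, and the right side is a measure, which bounds every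
decomposition sum by `|m|(x)`. Conversely, splitting `x = y + y'` gives
`|m y| + |m y'| ≥ 2 m y - m x`, so `v_m(x) ≥ 2 m⁺(x) - m(x) = |m|(x)`. -/

/-- A pseudo effect algebra: a partial algebra `(E; +, 0, 1)` where the partial
addition is encoded as `padd : E → E → Option E` (`padd a b = some c` means
`a + b` is defined and equals `c`). -/
class PseudoEffectAlgebra (E : Type) where
  padd : E → E → Option E
  pzero : E
  pone : E
  /-- (i) `a+b` and `(a+b)+c` exist iff `b+c` and `a+(b+c)` exist ... -/
  assoc_defined : ∀ a b c : E,
    (∃ x, padd a b = some x ∧ (padd x c).isSome) ↔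
      (∃ y, padd b c = some y ∧ (padd a y).isSome)
  /-- ... and in this case `(a+b)+c = a+(b+c)`. -/
  assoc_eq : ∀ a b c x y : E, padd a b = some x → padd b c = some y →
    padd x c = padd a y
  /-- (ii) there is exactly one `d` with `a + d = 1`. -/
  exists_unique_right : ∀ a : E, ∃! d, padd a d = some pone
  /-- (ii) there is exactly one `e` with `e + a = 1`. -/
  exists_unique_left : ∀ a : E, ∃! e, padd e a = some pone
  /-- (iii) if `a+b` exists, there are `d, e` with `a+b = d+a = b+e`. -/
  shift : ∀ a b c : E, padd a b = some c →
    ∃ d e, padd d a = some c ∧ padd b e = some c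
  /-- (iv) if `1+a` exists then `a = 0`. -/
  one_add : ∀ a : E, (padd pone a).isSome → a = pzero
  /-- (iv) if `a+1` exists then `a = 0`. -/
  add_one : ∀ a : E, (padd a pone).isSome → a = pzero

namespace PseudoEffectAlgebra

variable {E : Type} [PseudoEffectAlgebra E]

/-- The induced partial order: `a ≤ b` iff `b = a + c` for some `c ∈ E`. -/
def pLe (a b : E) : Prop := ∃ c, padd a c = some b

/-- The Riesz Decomposition Property (RDP). -/
def RDP (E : Type) [PseudoEffectAlgebra E] : Prop :=
  ∀ a₁ a₂ b₁ b₂ c : E, padd a₁ a₂ = some c → padd b₁ b₂ = some c →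
    ∃ d₁ d₂ d₃ d₄ : E, padd d₁ d₂ = some a₁ ∧ padd d₃ d₄ = some a₂ ∧
      padd d₁ d₃ = some b₁ ∧ padd d₂ d₄ = some b₂

/-- A signed measure on `E`. -/
def IsSignedMeasure (m : E → ℝ) : Prop :=
  ∀ a b c : E, padd a b = some c → m c = m a + m b

/-- A (positive) measure on `E`. -/
def IsMeasure (m : E → ℝ) : Prop :=
  IsSignedMeasure m ∧ ∀ a : E, 0 ≤ m a

/-- A state on `E`. -/
def IsState (s : E → ℝ) : Prop := IsMeasure s ∧ s pone = 1

/-- A Jordan signed measure: a difference of two measures. -/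
def IsJordan (m : E → ℝ) : Prop :=
  ∃ m₁ m₂ : E → ℝ, IsMeasure m₁ ∧ IsMeasure m₂ ∧ m = m₁ - m₂

/-- `m ≤⁺ m'` iff `m' - m` is a (positive) measure. -/
def MLe (m m' : E → ℝ) : Prop := IsMeasure (m' - m)

/-- The (partial) sum `x₁ + ⋯ + xₙ` of a nonempty list of elements of `E`. -/
def lsum : List E → Option E
  | [] => some pzero
  | [a] => some a
  | a :: b :: l => (lsum (b :: l)).bind (fun s => padd a s)

/-- `m` is the supremum, in the po-group `J(E)` of Jordan signed measures ordered
by `≤⁺`, of the set `S`. -/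
def IsSupIn (S : Set (E → ℝ)) (m : E → ℝ) : Prop :=
  IsJordan m ∧ (∀ t ∈ S, MLe t m) ∧
    ∀ h : E → ℝ, IsJordan h → (∀ t ∈ S, MLe t h) → MLe m h

/-- `m` is the infimum, in the po-group `J(E)` of Jordan signed measures ordered
by `≤⁺`, of the set `S`. -/
def IsInfIn (S : Set (E → ℝ)) (m : E → ℝ) : Prop :=
  IsJordan m ∧ (∀ t ∈ S, MLe m t) ∧
    ∀ h : E → ℝ, IsJordan h → (∀ t ∈ S, MLe h t) → MLe h m

lemma exists_assoc_right {a b c ab abc : E} (hab : padd a b = some ab)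
    (habc : padd ab c = some abc) :
    ∃ bc, padd b c = some bc ∧ padd a bc = some abc := by
  obtain ⟨bc, hbc, -⟩ := (assoc_defined a b c).1 ⟨ab, hab, by rw [habc]; rfl⟩
  exact ⟨bc, hbc, by rw [← assoc_eq a b c ab bc hab hbc, habc]⟩

lemma exists_assoc_left {a b c bc abc : E} (hbc : padd b c = some bc)
    (habc : padd a bc = some abc) :
    ∃ ab, padd a b = some ab ∧ padd ab c = some abc := by
  obtain ⟨ab, hab, -⟩ := (assoc_defined a b c).2 ⟨bc, hbc, by rw [habc]; rfl⟩
  exact ⟨ab, hab, by rw [assoc_eq a b c ab bc hab hbc, habc]⟩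

lemma padd_zero_one : padd (pzero : E) pone = some pone := by
  obtain ⟨e, he, -⟩ := exists_unique_left (pone : E)
  rwa [add_one e (by rw [he]; rfl)] at he

lemma padd_one_zero : padd (pone : E) pzero = some pone := by
  obtain ⟨d, hd, -⟩ := exists_unique_right (pone : E)
  rwa [one_add d (by rw [hd]; rfl)] at hd

lemma zero_padd (a : E) : padd pzero a = some a := by
  obtain ⟨d, hd, -⟩ := exists_unique_right a
  obtain ⟨x, hx, hxd⟩ := exists_assoc_left hd padd_zero_one
  obtain ⟨e, -, huniq⟩ := exists_unique_left d
  rw [hx, huniq x hxd, ← huniq a hd]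

lemma padd_zero (a : E) : padd a pzero = some a := by
  obtain ⟨e, he, -⟩ := exists_unique_left a
  obtain ⟨y, hy, hey⟩ := exists_assoc_right he padd_one_zero
  obtain ⟨d, -, huniq⟩ := exists_unique_right e
  rw [hy, huniq y hey, ← huniq a he]

lemma pLe_refl (a : E) : pLe a a := ⟨pzero, padd_zero a⟩

lemma zero_pLe (a : E) : pLe pzero a := ⟨a, zero_padd a⟩

lemma pLe_trans {a b c : E} : pLe a b → pLe b c → pLe a c := by
  rintro ⟨s, hs⟩ ⟨t, ht⟩
  obtain ⟨y, -, hay⟩ := exists_assoc_right hs ht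
  exact ⟨y, hay⟩

lemma pLe_of_padd_left {a b c : E} (h : padd a b = some c) : pLe b c := by
  obtain ⟨-, e, -, hbe⟩ := shift a b c h
  exact ⟨e, hbe⟩

lemma exists_padd_pLe_of_pLe_of_pLe {a b c u w : E} (hab : padd a b = some c)
    (hu : pLe u a) (hw : pLe w b) : ∃ q, padd u w = some q ∧ pLe q c := by
  obtain ⟨u', hu⟩ := hu
  obtain ⟨w', hw⟩ := hw
  obtain ⟨d, -, hdu, -⟩ := shift u u' a hu
  obtain ⟨y, huy, hdy⟩ := exists_assoc_right hdu hab
  obtain ⟨q, hq, hqy⟩ := exists_assoc_left hw huy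
  exact ⟨q, hq, pLe_trans ⟨w', hqy⟩ (pLe_of_padd_left hdy)⟩

lemma IsSignedMeasure.map_zero {μ : E → ℝ} (hμ : IsSignedMeasure μ) : μ pzero = 0 := by
  linarith [hμ pzero pzero pzero (padd_zero pzero)]

lemma IsSignedMeasure.map_lsum {μ : E → ℝ} (hμ : IsSignedMeasure μ) :
    ∀ {l : List E} {x : E}, lsum l = some x → μ x = (l.map μ).sum
  | [], x, h => by
      obtain rfl : pzero = x := Option.some_injective _ h
      simp [hμ.map_zero]
  | [a], x, h => by
      obtain rfl : a = x := Option.some_injective _ h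
      simp
  | a :: b :: l, x, h => by
      obtain ⟨s, hs, has⟩ := Option.bind_eq_some_iff.1 h
      rw [List.map_cons, List.sum_cons, ← hμ.map_lsum hs, hμ a s x has]

lemma IsMeasure.add {f g : E → ℝ} (hf : IsMeasure f) (hg : IsMeasure g) :
    IsMeasure (f + g) := by
  refine ⟨fun a b c h => ?_, fun a => add_nonneg (hf.2 a) (hg.2 a)⟩
  simp only [Pi.add_apply, hf.1 a b c h, hg.1 a b c h]
  ring

lemma IsMeasure.isJordan {f : E → ℝ} (hf : IsMeasure f) : IsJordan f :=
  ⟨f, 0, hf, ⟨fun _ _ _ _ => by simp, fun _ => le_rfl⟩, (sub_zero f).symm⟩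

lemma IsJordan.isSignedMeasure {μ : E → ℝ} (hμ : IsJordan μ) : IsSignedMeasure μ := by
  obtain ⟨m₁, m₂, h₁, h₂, rfl⟩ := hμ
  intro a b c h
  simp only [Pi.sub_apply, h₁.1 a b c h, h₂.1 a b c h]
  ring

lemma IsJordan.sub {f g : E → ℝ} (hf : IsJordan f) (hg : IsJordan g) :
    IsJordan (f - g) := by
  obtain ⟨f₁, f₂, hf₁, hf₂, rfl⟩ := hf
  obtain ⟨g₁, g₂, hg₁, hg₂, rfl⟩ := hg
  exact ⟨f₁ + g₂, f₂ + g₁, hf₁.add hg₂, hf₂.add hg₁, by abel⟩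

lemma MLe.apply_le {f g : E → ℝ} (h : MLe f g) (a : E) : f a ≤ g a :=
  sub_nonneg.1 (h.2 a)

lemma MLe.trans {f g h : E → ℝ} (hfg : MLe f g) (hgh : MLe g h) : MLe f h := by
  have := hgh.add hfg
  rwa [sub_add_sub_cancel] at this

/-- The paper's formula `m⁺(a) = sup {m y : y ≤ a}`. -/
noncomputable def supBelow (μ : E → ℝ) (a : E) : ℝ :=
  sSup {r : ℝ | ∃ y, pLe y a ∧ r = μ y}

section SupBelow

variable {μ : E → ℝ}

lemma bddAbove_supBelow_set (hμ : IsJordan μ) (a : E) :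
    BddAbove {r : ℝ | ∃ y, pLe y a ∧ r = μ y} := by
  obtain ⟨m₁, m₂, h₁, h₂, rfl⟩ := hμ
  refine ⟨m₁ a, ?_⟩
  rintro r ⟨y, ⟨c, hc⟩, rfl⟩
  simp only [Pi.sub_apply, h₁.1 y c a hc]
  linarith [h₁.2 c, h₂.2 y]

lemma le_supBelow (hμ : IsJordan μ) {y a : E} (h : pLe y a) : μ y ≤ supBelow μ a :=
  le_csSup (bddAbove_supBelow_set hμ a) ⟨y, h, rfl⟩

lemma supBelow_le {a : E} {r : ℝ} (h : ∀ y, pLe y a → μ y ≤ r) : supBelow μ a ≤ r :=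
  csSup_le ⟨μ a, a, pLe_refl a, rfl⟩ (by rintro s ⟨y, hy, rfl⟩; exact h y hy)

lemma supBelow_nonneg (hμ : IsJordan μ) (a : E) : 0 ≤ supBelow μ a := by
  simpa only [hμ.isSignedMeasure.map_zero] using le_supBelow hμ (zero_pLe a)

lemma supBelow_add (hRDP : RDP E) (hμ : IsJordan μ) {a b c : E} (hab : padd a b = some c) :
    supBelow μ c = supBelow μ a + supBelow μ b := by
  have hμs := hμ.isSignedMeasure
  refine le_antisymm (supBelow_le fun y ⟨y', hy⟩ => ?_) ?_
  · obtain ⟨d₁, d₂, d₃, d₄, hd, -, hd₁, hd₂⟩ := hRDP y y' a b c hy hab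
    rw [hμs d₁ d₂ y hd]
    exact add_le_add (le_supBelow hμ ⟨d₃, hd₁⟩) (le_supBelow hμ ⟨d₄, hd₂⟩)
  · rw [← le_sub_iff_add_le]
    refine supBelow_le fun u hu => ?_
    rw [le_sub_comm]
    refine supBelow_le fun w hw => ?_
    obtain ⟨q, hq, hqc⟩ := exists_padd_pLe_of_pLe_of_pLe hab hu hw
    rw [le_sub_iff_add_le', ← hμs u w q hq]
    exact le_supBelow hμ hqc

lemma isMeasure_supBelow (hRDP : RDP E) (hμ : IsJordan μ) : IsMeasure (supBelow μ) :=
  ⟨fun _ _ _ h => supBelow_add hRDP hμ h, supBelow_nonneg hμ⟩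

lemma isMeasure_supBelow_sub (hRDP : RDP E) (hμ : IsJordan μ) :
    IsMeasure (supBelow μ - μ) := by
  refine ⟨fun a b c h => ?_, fun a => sub_nonneg.2 (le_supBelow hμ (pLe_refl a))⟩
  simp only [Pi.sub_apply, supBelow_add hRDP hμ h, hμ.isSignedMeasure a b c h]
  ring

end SupBelow

section PosPart

variable {m mp mi : E → ℝ}

lemma IsSupIn.le_supBelow (hRDP : RDP E) (hm : IsJordan m) (hp : IsSupIn {m, 0} mp) :
    MLe mp (supBelow m) := by
  refine hp.2.2 _ (isMeasure_supBelow hRDP hm).isJordan ?_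
  rintro t (rfl | rfl)
  · exact isMeasure_supBelow_sub hRDP hm
  · simpa [MLe] using isMeasure_supBelow hRDP hm

lemma IsInfIn.sub_supBelow_le (hRDP : RDP E) (hm : IsJordan m) (hi : IsInfIn {m, 0} mi) :
    MLe (m - supBelow m) mi := by
  refine hi.2.2 _ (hm.sub (isMeasure_supBelow hRDP hm).isJordan) ?_
  rintro t (rfl | rfl)
  · simpa [MLe] using isMeasure_supBelow hRDP hm
  · simpa [MLe] using isMeasure_supBelow_sub hRDP hm

lemma abs_le_sub_of_isSupIn_of_isInfIn (hp : IsSupIn {m, 0} mp) (hi : IsInfIn {m, 0} mi)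
    (y : E) : |m y| ≤ mp y - mi y := by
  have hmp := (hp.2.1 m (by simp)).apply_le y
  have hmp₀ := (hp.2.1 0 (by simp)).apply_le y
  have hmi := (hi.2.1 m (by simp)).apply_le y
  have hmi₀ := (hi.2.1 0 (by simp)).apply_le y
  simp only [Pi.zero_apply] at hmp₀ hmi₀
  rw [abs_le]
  constructor <;> linarith

end PosPart

/-- `v_m(x) = sSup (decompSums m x)`. -/
def decompSums (m : E → ℝ) (x : E) : Set ℝ :=
  {r : ℝ | ∃ l : List E, l ≠ [] ∧ lsum l = some x ∧ r = (l.map (fun y => |m y|)).sum}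

section DecompSums

variable {m : E → ℝ}

lemma abs_mem_decompSums (m : E → ℝ) (x : E) : |m x| ∈ decompSums m x :=
  ⟨[x], List.cons_ne_nil _ _, rfl, by simp⟩

lemma add_abs_mem_decompSums {x y y' : E} (h : padd y y' = some x) :
    |m y| + |m y'| ∈ decompSums m x :=
  ⟨[y, y'], List.cons_ne_nil _ _, h, by simp⟩

lemma le_of_mem_decompSums {μ : E → ℝ} (hμ : IsSignedMeasure μ) (hle : ∀ y, |m y| ≤ μ y)
    {x : E} {r : ℝ} (hr : r ∈ decompSums m x) : r ≤ μ x := by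
  obtain ⟨l, -, hl, rfl⟩ := hr
  rw [hμ.map_lsum hl]
  exact List.sum_le_sum fun y _ => hle y

lemma two_mul_supBelow_sub_le (hm : IsJordan m) {x : E} (hbdd : BddAbove (decompSums m x)) :
    2 * supBelow m x - m x ≤ sSup (decompSums m x) := by
  suffices supBelow m x ≤ (sSup (decompSums m x) + m x) / 2 by linarith
  refine supBelow_le fun y ⟨y', hy⟩ => ?_
  have hsum := le_csSup hbdd (add_abs_mem_decompSums (m := m) hy)
  rw [hm.isSignedMeasure y y' x hy]
  linarith [le_abs_self (m y), neg_abs_le (m y')]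

end DecompSums

/-- Proposition 4.6: for a Jordan signed measure `m` on a pseudo
effect algebra with (RDP), the total variation
`v_m(x) = sup{|m(x₁)| + ⋯ + |m(xₙ)| : x = x₁ + ⋯ + xₙ}` equals
`|m| = m⁺ + m⁻`, where `m⁺ = m ⋁ 0` and `m⁻ = -(m ⋀ 0)` in `J(E)`. -/
theorem stmt12 (hRDP : RDP E) (m : E → ℝ) (hm : IsJordan m)
    (mp mi : E → ℝ)
    (hp : IsSupIn {m, 0} mp)    -- `mp = m⁺ = m ⋁ 0`
    (hi : IsInfIn {m, 0} mi) :  -- `-mi = m⁻ = -(m ⋀ 0)`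
    ∀ x : E, sSup {r : ℝ | ∃ l : List E, l ≠ [] ∧ lsum l = some x ∧
      r = (l.map (fun y => |m y|)).sum} = mp x + -(mi x) := by
  intro x
  have hvar : IsMeasure (mp - mi) := (hi.2.1 0 (by simp)).trans (hp.2.1 0 (by simp))
  have hub : ∀ r ∈ decompSums m x, r ≤ mp x + -(mi x) := fun r hr => by
    simpa [sub_eq_add_neg] using
      le_of_mem_decompSums hvar.1 (abs_le_sub_of_isSupIn_of_isInfIn hp hi) hr
  change sSup (decompSums m x) = _
  refine le_antisymm (csSup_le ⟨_, abs_mem_decompSums m x⟩ hub) ?_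
  calc mp x + -(mi x) ≤ supBelow m x + (supBelow m x - m x) := by
        have := (hp.le_supBelow hRDP hm).apply_le x
        have := (hi.sub_supBelow_le hRDP hm).apply_le x
        simp only [Pi.sub_apply] at this
        linarith
    _ = 2 * supBelow m x - m x := by ring
    _ ≤ sSup (decompSums m x) := two_mul_supBelow_sub_le hm ⟨_, hub⟩

end PseudoEffectAlgebra
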